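/- arXiv:1008.1128 — 2 statements merged into one kernel-verified Lean document; each statement's English description precedes it below -/
import Mathlib

section
/- Let A and B be 2×2 complex matrices and let u, v ∈ ℂ² be linearly independent. Suppose ‖A·u‖ = ‖B·u‖, ‖A·v‖ = ‖B·v‖, and |⟨A·u, A·v⟩| = |⟨B·u, B·v⟩|. Then rank A = rank B. -/
/-!
Since `u, v` span `ℂ²`, the rank of `A` is the dimension of `span {A u, A v}`. The dimension of
the span of two vectors `x, y` is determined by `‖x‖`, `‖y‖` and `‖⟪x, y⟫‖`: it is `0` iff both
norms vanish, and `2` iff the Cauchy–Schwarz inequality `‖⟪x, y⟫‖ ≤ ‖x‖ * ‖y‖` is strict.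
-/

open scoped InnerProductSpace

open Module Submodule

theorem LinearMap.range_eq_span_range_comp {R M N ι : Type*} [Semiring R] [AddCommMonoid M]
    [AddCommMonoid N] [Module R M] [Module R N] (f : M →ₗ[R] N) {b : ι → M}
    (hb : span R (Set.range b) = ⊤) : LinearMap.range f = span R (Set.range (f ∘ b)) := by
  rw [range_eq_map, ← hb, map_span, Set.range_comp]

theorem Matrix.rank_eq_finrank_range_toEuclideanLin {𝕜 m n : Type*} [RCLike 𝕜] [Fintype m]
    [Fintype n] [DecidableEq n] (A : Matrix m n 𝕜) :
    A.rank = finrank 𝕜 (LinearMap.range (Matrix.toEuclideanLin A)) := by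
  rw [A.rank_eq_finrank_range_toLin (EuclideanSpace.basisFun m 𝕜).toBasis
    (EuclideanSpace.basisFun n 𝕜).toBasis]
  congr 2

theorem Matrix.rank_eq_finrank_range_toEuclideanLin_comp {𝕜 m n ι : Type*} [RCLike 𝕜]
    [Fintype m] [Fintype n] [DecidableEq n] (A : Matrix m n 𝕜) {b : ι → EuclideanSpace 𝕜 n}
    (hb : span 𝕜 (Set.range b) = ⊤) :
    A.rank = (Set.range (Matrix.toEuclideanLin A ∘ b)).finrank 𝕜 := by
  rw [A.rank_eq_finrank_range_toEuclideanLin, LinearMap.range_eq_span_range_comp _ hb,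
    Set.finrank]

section Pair

variable {K V : Type*} [DivisionRing K] [AddCommGroup V] [Module K V]

theorem finrank_range_pair_le_two (x y : V) : (Set.range ![x, y]).finrank K ≤ 2 :=
  (finrank_range_le_card _).trans_eq (Fintype.card_fin 2)

theorem finrank_range_pair_eq_zero_iff {x y : V} :
    (Set.range ![x, y]).finrank K = 0 ↔ x = 0 ∧ y = 0 := by
  have := Module.Finite.span_of_finite K (Set.finite_range ![x, y])
  rw [Set.finrank, Submodule.finrank_eq_zero, span_eq_bot]
  simp [and_comm]

theorem finrank_range_pair_eq_two_iff {x y : V} :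
    (Set.range ![x, y]).finrank K = 2 ↔ LinearIndependent K ![x, y] := by
  rw [linearIndependent_iff_card_eq_finrank_span, Fintype.card_fin, eq_comm]

end Pair

section InnerProduct

variable {𝕜 E : Type*} [RCLike 𝕜] [NormedAddCommGroup E] [InnerProductSpace 𝕜 E]

theorem linearIndependent_pair_iff_norm_inner_ne {x y : E} :
    LinearIndependent 𝕜 ![x, y] ↔ ‖⟪x, y⟫_𝕜‖ ≠ ‖x‖ * ‖y‖ := by
  rw [Ne, ((norm_inner_eq_norm_tfae 𝕜 x y).out 0 2 :)]
  by_cases hx : x = 0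
  · simpa [hx] using LinearIndependent.ne_zero (R := 𝕜) (v := ![0, y]) 0
  · simp [hx, LinearIndependent.pair_iff' hx, eq_comm]

theorem finrank_range_pair_eq_of_norm_eq {x y x' y' : E} (hx : ‖x‖ = ‖x'‖) (hy : ‖y‖ = ‖y'‖)
    (hxy : ‖⟪x, y⟫_𝕜‖ = ‖⟪x', y'⟫_𝕜‖) :
    (Set.range ![x, y]).finrank 𝕜 = (Set.range ![x', y']).finrank 𝕜 := by
  have h0 : (Set.range ![x, y]).finrank 𝕜 = 0 ↔ (Set.range ![x', y']).finrank 𝕜 = 0 := by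
    rw [finrank_range_pair_eq_zero_iff, finrank_range_pair_eq_zero_iff, ← norm_eq_zero,
      ← norm_eq_zero (a := y), hx, hy, norm_eq_zero, norm_eq_zero]
  have h2 : (Set.range ![x, y]).finrank 𝕜 = 2 ↔ (Set.range ![x', y']).finrank 𝕜 = 2 := by
    simp only [finrank_range_pair_eq_two_iff, linearIndependent_pair_iff_norm_inner_ne, hx, hy, hxy]
  have := finrank_range_pair_le_two (K := 𝕜) x y
  have := finrank_range_pair_le_two (K := 𝕜) x' y'
  omega

end InnerProduct

theorem stmt_3 (A B : Matrix (Fin 2) (Fin 2) ℂ) (u v : EuclideanSpace ℂ (Fin 2))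
    (hind : LinearIndependent ℂ ![u, v])
    (h1 : ‖Matrix.toEuclideanLin A u‖ = ‖Matrix.toEuclideanLin B u‖)
    (h2 : ‖Matrix.toEuclideanLin A v‖ = ‖Matrix.toEuclideanLin B v‖)
    (h3 : ‖⟪Matrix.toEuclideanLin A u, Matrix.toEuclideanLin A v⟫_ℂ‖
        = ‖⟪Matrix.toEuclideanLin B u, Matrix.toEuclideanLin B v⟫_ℂ‖) :
    A.rank = B.rank := by
  have hspan : span ℂ (Set.range ![u, v]) = ⊤ := hind.span_eq_top_of_card_eq_finrank' (by simp)
  rw [A.rank_eq_finrank_range_toEuclideanLin_comp hspan,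
    B.rank_eq_finrank_range_toEuclideanLin_comp hspan, ← FinVec.map_eq, ← FinVec.map_eq]
  -- `FinVec.map f ![a, b]` unfolds definitionally to `![f a, f b]`
  exact finrank_range_pair_eq_of_norm_eq h1 h2 h3
end

section
/- Let θ be a real number with e^{iθ} ≠ 1, let c be a nonzero complex number, and let X be an invertible 2×2 complex matrix. For i, j ∈ {0,1} set ε_{ij} = e^{iθ} if i = j = 1 and ε_{ij} = 1 otherwise. Suppose vectors a_{ki}, b_{lj} ∈ ℂ² for k, i, l, j ∈ {0,1} satisfy: ⟨a_{ki}, X·b_{lj}⟩ = c·ε_{ij} whenever k = i and l = j, and ⟨a_{ki}, X·b_{lj}⟩ = 0 otherwise. Then a₀₀ and a₁₁ are linearly independent, b₀₀ and b₁₁ are linearly independent, and a₀₁ = a₁₀ = 0 and b₀₁ = b₁₀ = 0. -/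
open scoped InnerProductSpace Matrix

/-!
Put `u = (a₀₀, a₁₁)` and `v = (X b₀₀, X b₁₁)`. The matrix `(⟪u p, v q⟫)` is
`c • !![1, 1; 1, e^{iθ}]`, whose determinant `c² (e^{iθ} - 1)` is nonzero, so `u` and `v` are
both linearly independent, hence bases of `ℂ²`. The vectors `a₀₁, a₁₀` are orthogonal to the
basis `v`, and `X b₀₁, X b₁₀` to the basis `u`, so they vanish; `X` is injective, so
`b₀₁ = b₁₀ = 0`, and `b₀₀, b₁₁` are independent because their images are.
-/

section InnerMatrix

variable {𝕜 E ι : Type*} [RCLike 𝕜] [NormedAddCommGroup E] [InnerProductSpace 𝕜 E]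
  [Fintype ι] [DecidableEq ι]

theorem linearIndependent_right_of_det_inner_ne_zero (u v : ι → E)
    (hdet : (Matrix.of fun i j => ⟪u i, v j⟫_𝕜).det ≠ 0) : LinearIndependent 𝕜 v := by
  rw [Fintype.linearIndependent_iff]
  intro g hg
  have hmulVec : (Matrix.of fun i j => ⟪u i, v j⟫_𝕜) *ᵥ g = 0 := by
    ext i
    simpa [Matrix.mulVec, dotProduct, inner_sum, inner_smul_right, mul_comm] using
      congrArg (fun w => ⟪u i, w⟫_𝕜) hg
  exact congrFun (Matrix.eq_zero_of_mulVec_eq_zero hdet hmulVec)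

theorem linearIndependent_left_of_det_inner_ne_zero (u v : ι → E)
    (hdet : (Matrix.of fun i j => ⟪u i, v j⟫_𝕜).det ≠ 0) : LinearIndependent 𝕜 u := by
  refine linearIndependent_right_of_det_inner_ne_zero v u ?_
  have hconj :
      (Matrix.of fun i j => ⟪v i, u j⟫_𝕜) = (Matrix.of fun i j => ⟪u i, v j⟫_𝕜)ᴴ := by
    ext i j
    simp
  rw [hconj, Matrix.det_conjTranspose]
  exact star_ne_zero.mpr hdet

end InnerMatrix

theorem eq_zero_of_inner_eq_zero_of_linearIndependent {𝕜 E ι : Type*} [RCLike 𝕜]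
    [NormedAddCommGroup E] [InnerProductSpace 𝕜 E] [FiniteDimensional 𝕜 E] [Fintype ι]
    {u : ι → E} (hu : LinearIndependent 𝕜 u) (hcard : Fintype.card ι = Module.finrank 𝕜 E)
    {w : E} (hw : ∀ i, ⟪u i, w⟫_𝕜 = 0) : w = 0 :=
  InnerProductSpace.ext_inner_left_basis (basisOfLinearIndependentOfCardEqFinrank' u hu hcard)
    (by simpa using hw)

theorem Matrix.toEuclideanLin_injective_of_isUnit {𝕜 n : Type*} [RCLike 𝕜] [Fintype n]
    [DecidableEq n] {A : Matrix n n 𝕜} (hA : IsUnit A) :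
    Function.Injective (Matrix.toEuclideanLin A) := fun _ _ hxy =>
  WithLp.ofLp_injective 2 <| Matrix.mulVec_injective_iff_isUnit.mpr hA <|
    WithLp.toLp_injective 2 hxy

theorem stmt_4 (θ : ℝ) (hθ : Complex.exp (θ * Complex.I) ≠ 1)
    (c : ℂ) (hc : c ≠ 0) (X : Matrix (Fin 2) (Fin 2) ℂ) (hX : IsUnit X)
    (a b : Fin 2 → Fin 2 → EuclideanSpace ℂ (Fin 2))
    (ε : Fin 2 → Fin 2 → ℂ)
    (hε : ∀ i j, ε i j = if i = 1 ∧ j = 1 then Complex.exp (θ * Complex.I) else 1)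
    (h : ∀ k i l j, ⟪a k i, Matrix.toEuclideanLin X (b l j)⟫_ℂ =
        if k = i ∧ l = j then c * ε i j else 0) :
    LinearIndependent ℂ ![a 0 0, a 1 1] ∧ LinearIndependent ℂ ![b 0 0, b 1 1] ∧
      a 0 1 = 0 ∧ a 1 0 = 0 ∧ b 0 1 = 0 ∧ b 1 0 = 0 := by
  set T := Matrix.toEuclideanLin X
  set u := ![a 0 0, a 1 1]
  set v := ![T (b 0 0), T (b 1 1)]
  have hdet : (Matrix.of fun i j => ⟪u i, v j⟫_ℂ).det ≠ 0 := by
    have hval : (Matrix.of fun i j => ⟪u i, v j⟫_ℂ).det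
        = c ^ 2 * (Complex.exp (θ * Complex.I) - 1) := by
      simp [Matrix.det_fin_two, u, v, h, hε]
      ring
    rw [hval]
    exact mul_ne_zero (pow_ne_zero 2 hc) (sub_ne_zero.mpr hθ)
  have hu := linearIndependent_left_of_det_inner_ne_zero u v hdet
  have hv := linearIndependent_right_of_det_inner_ne_zero u v hdet
  have hcard : Fintype.card (Fin 2) = Module.finrank ℂ (EuclideanSpace ℂ (Fin 2)) := by simp
  have hT : Function.Injective T := Matrix.toEuclideanLin_injective_of_isUnit hX
  have ha_off (k i : Fin 2) (hki : k ≠ i) : a k i = 0 := by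
    refine eq_zero_of_inner_eq_zero_of_linearIndependent hv hcard fun j => ?_
    rw [inner_eq_zero_symm]
    fin_cases j <;> simpa [v, hki] using h k i _ _
  have hb_off (l j : Fin 2) (hlj : l ≠ j) : b l j = 0 := by
    refine (map_eq_zero_iff T hT).mp <|
      eq_zero_of_inner_eq_zero_of_linearIndependent hu hcard fun i => ?_
    fin_cases i <;> simpa [u, hlj] using h _ _ l j
  refine ⟨hu, ?_, ha_off 0 1 (by decide), ha_off 1 0 (by decide), hb_off 0 1 (by decide),
    hb_off 1 0 (by decide)⟩
  have hTb : T ∘ ![b 0 0, b 1 1] = v := by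
    ext1 i
    fin_cases i <;> rfl
  exact .of_comp T (hTb ▸ hv)
end
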